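/- On the whole Boyer–Lindquist phase-space chart U (including the horizon r = r_s/2), the rescaled principal symbol factors as P₀ = (Σ·sinθ·D/c²)·[ (p_t + Ψ)² − Δ·Φ ]. Equivalently, at every point with r ≠ r_s/2 the full symbol g^{μν}p_μp_ν of the extremal Kerr wave operator equals g^{tt}·[ (p_t + Ψ)² − Δ·Φ ]. -/

import Mathlib

noncomputable section

/-- Σ = r² + (r_s²/4)·cos²θ -/
def Sig (rs r th : ℝ) : ℝ := r ^ 2 + rs ^ 2 / 4 * Real.cos th ^ 2

/-- Δ = (r − r_s/2)² -/
def Del (rs r : ℝ) : ℝ := (r - rs / 2) ^ 2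

/-- D = r² + r_s²/4 + (r_s·r/Σ)·(r_s²/4)·sin²θ -/
def Dfun (rs r th : ℝ) : ℝ :=
  r ^ 2 + rs ^ 2 / 4 + rs * r / Sig rs r th * (rs ^ 2 / 4) * Real.sin th ^ 2

/-- Ψ = ((r_s·c/2)·(r_s·r/Σ)/D)·p_φ -/
def Psi (rs c r th pph : ℝ) : ℝ :=
  rs * c / 2 * (rs * r / Sig rs r th) / Dfun rs r th * pph

/-- Φ = (c²/D)·[(Δ/Σ)·p_r² + (1/Σ)·p_θ² + (1/(D·sin²θ))·p_φ²] -/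
def Phi (rs c r th pr pth pph : ℝ) : ℝ :=
  c ^ 2 / Dfun rs r th *
    (Del rs r / Sig rs r th * pr ^ 2 + 1 / Sig rs r th * pth ^ 2
      + 1 / (Dfun rs r th * Real.sin th ^ 2) * pph ^ 2)

/-- The Δ-rescaled principal symbol P₀ of P = Δ·□_g for extremal Kerr. -/
def P0 (rs c t r th ph pt pr pth pph : ℝ) : ℝ :=
  Sig rs r th * Real.sin th *
    (Dfun rs r th / c ^ 2 * pt ^ 2 + rs ^ 2 * r / (c * Sig rs r th) * (pt * pph)
      - Del rs r ^ 2 / Sig rs r th * pr ^ 2 - Del rs r / Sig rs r th * pth ^ 2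
      - 1 / Real.sin th ^ 2 * (1 - rs * r / Sig rs r th) * pph ^ 2)

/-- g^{tt} = −D/(c²·Δ) -/
def gtt (rs c r th : ℝ) : ℝ := -(Dfun rs r th) / (c ^ 2 * Del rs r)

/-- g^{tφ} = −r_s²·r/(2·c·Δ·Σ) -/
def gtph (rs c r th : ℝ) : ℝ := -(rs ^ 2 * r) / (2 * c * Del rs r * Sig rs r th)

/-- g^{φφ} = (1/(Δ·sin²θ))·(1 − r_s·r/Σ) -/
def gphph (rs r th : ℝ) : ℝ :=
  1 / (Del rs r * Real.sin th ^ 2) * (1 - rs * r / Sig rs r th)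

/-! Expanding the square, the `p_t²` and `p_t p_φ` terms of `(Σ sinθ D/c²)·[(p_t + Ψ)² − ΔΦ]` match
those of `P₀` by the choice of `Ψ`, and the `p_φ²` terms match because of the identity
`D·(1 − r_s r/Σ) = Δ − (r_s²/4)(r_s r/Σ)² sin²θ`, which holds for every `r` (no division by `Δ`).
Off the horizon, `g^{μν}p_μp_ν = −(P₀/(Σ sinθ))/Δ`, so the second form follows by dividing by `Δ`. -/

/-- `P₀ = Σ·sinθ·P0bracket`. -/
def P0bracket (rs c r th pt pr pth pph : ℝ) : ℝ :=
  Dfun rs r th / c ^ 2 * pt ^ 2 + rs ^ 2 * r / (c * Sig rs r th) * (pt * pph)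
    - Del rs r ^ 2 / Sig rs r th * pr ^ 2 - Del rs r / Sig rs r th * pth ^ 2
    - 1 / Real.sin th ^ 2 * (1 - rs * r / Sig rs r th) * pph ^ 2

theorem Sig_pos (rs : ℝ) {r : ℝ} (th : ℝ) (hr : r ≠ 0) : 0 < Sig rs r th := by
  unfold Sig; positivity

theorem Dfun_pos {rs r : ℝ} (th : ℝ) (hr : r ≠ 0) (hrsr : 0 ≤ rs * r) : 0 < Dfun rs r th := by
  have := Sig_pos rs th hr
  unfold Dfun; positivity

/-- With `a = r_s/2` one has `r² + a² − r_s r = Δ` (extremality) and `r² + a² − a² sin²θ = Σ`. -/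
theorem Dfun_mul_one_sub {rs r th : ℝ} (hS : Sig rs r th ≠ 0) :
    Dfun rs r th * (1 - rs * r / Sig rs r th)
      = Del rs r - rs ^ 2 / 4 * (rs * r / Sig rs r th) ^ 2 * Real.sin th ^ 2 := by
  have hSig : Sig rs r th = r ^ 2 + rs ^ 2 / 4 - rs ^ 2 / 4 * Real.sin th ^ 2 := by
    rw [Sig, Real.cos_sq']; ring
  unfold Dfun Del
  field_simp
  rw [hSig]; ring

theorem completing_square {rs c r th : ℝ} (pt pr pth pph : ℝ) (hc : c ≠ 0)
    (hS : Sig rs r th ≠ 0) (hD : Dfun rs r th ≠ 0) (hsin : Real.sin th ≠ 0) :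
    Dfun rs r th / c ^ 2 * ((pt + Psi rs c r th pph) ^ 2 - Del rs r * Phi rs c r th pr pth pph)
      = P0bracket rs c r th pt pr pth pph := by
  have key := Dfun_mul_one_sub hS
  field_simp at key
  unfold Psi Phi P0bracket
  field_simp
  linear_combination c ^ 2 * pph ^ 2 * key

theorem Del_ne_zero {rs r : ℝ} (hr : r ≠ rs / 2) : Del rs r ≠ 0 :=
  pow_ne_zero 2 (sub_ne_zero.mpr hr)

theorem inverseMetric_quadForm_eq {rs c r th : ℝ} (pt pr pth pph : ℝ) (hΔ : Del rs r ≠ 0) :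
    gtt rs c r th * pt ^ 2 + 2 * gtph rs c r th * (pt * pph)
        + Del rs r / Sig rs r th * pr ^ 2 + 1 / Sig rs r th * pth ^ 2 + gphph rs r th * pph ^ 2
      = -P0bracket rs c r th pt pr pth pph / Del rs r := by
  unfold gtt gtph gphph P0bracket
  field_simp
  ring

/-- on the whole chart U (including the horizon), the rescaled principal
symbol factors as P₀ = (Σ·sinθ·D/c²)·[(p_t + Ψ)² − Δ·Φ]; equivalently, off the horizon,
g^{μν}p_μp_ν = g^{tt}·[(p_t + Ψ)² − Δ·Φ]. -/
theorem P0_factorization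
    (rs c : ℝ) (hrs : 0 < rs) (hc : 0 < c)
    (t r th ph pt pr pth pph : ℝ)
    (hr : 0 < r) (hth : Real.sin th ≠ 0) :
    P0 rs c t r th ph pt pr pth pph
      = Sig rs r th * Real.sin th * Dfun rs r th / c ^ 2 *
          ((pt + Psi rs c r th pph) ^ 2 - Del rs r * Phi rs c r th pr pth pph)
    ∧ (r ≠ rs / 2 →
        gtt rs c r th * pt ^ 2 + 2 * gtph rs c r th * (pt * pph)
          + Del rs r / Sig rs r th * pr ^ 2 + 1 / Sig rs r th * pth ^ 2
          + gphph rs r th * pph ^ 2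
        = gtt rs c r th *
            ((pt + Psi rs c r th pph) ^ 2 - Del rs r * Phi rs c r th pr pth pph)) := by
  have hsquare := completing_square pt pr pth pph hc.ne' (Sig_pos rs th hr.ne').ne'
    (Dfun_pos th hr.ne' (mul_pos hrs hr).le).ne' hth
  refine ⟨?_, fun hoff => ?_⟩
  · calc P0 rs c t r th ph pt pr pth pph
          = Sig rs r th * Real.sin th * P0bracket rs c r th pt pr pth pph := rfl
      _ = _ := by rw [← hsquare]; ring
  · rw [inverseMetric_quadForm_eq pt pr pth pph (Del_ne_zero hoff), ← hsquare, gtt]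
    ring
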